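/- arXiv:1007.4543 — 6 statements merged into one kernel-verified Lean document; each statement's English description precedes it below -/
import Mathlib

section
/- If v and w are weight structures on a triangulated category C with C^{v≤0} ⊆ C^{w≤0} and C^{v≥0} ⊆ C^{w≥0}, then v = w (both inclusions are equalities). -/
/-!
A weight structure is determined by either of its halves: `C^{w≤0}` consists exactly of the
objects `M` with no nonzero maps `B ⟶ M[1]` from `C^{w≥0}`, and `C^{w≥0}` of the objects `M`
with no nonzero maps `M ⟶ A[1]` to `C^{w≤0}`. Indeed, if such maps vanish, the third (resp.
first) morphism of a weight decomposition of `M` (resp. `M[-1]`) is zero, so `M` is a retract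
of its `≤ 0` (resp. `≥ 0`) part. Orthogonality for `w` together with the inclusions shows that
every object of `C^{w≤0}` (resp. `C^{w≥0}`) satisfies the criterion for `v`.
-/

open CategoryTheory Category Limits Pretriangulated

/-- `X` is a retract of `Y`. -/
def IsRetract {C : Type*} [Category C] (X Y : C) : Prop :=
  ∃ (i : X ⟶ Y) (r : Y ⟶ X), i ≫ r = 𝟙 X

/-- A weight structure on a triangulated category `C`, given by the pair of classes
`le = C^{w≤0}` and `ge = C^{w≥0}` (Bondarko). -/
structure IsWeightStructure (C : Type*) [Category C] [HasZeroObject C] [HasShift C ℤ]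
    [Preadditive C] [∀ n : ℤ, (shiftFunctor C n).Additive] [Pretriangulated C]
    (le ge : Set C) : Prop where
  le_retract : ∀ ⦃X Y : C⦄, Y ∈ le → IsRetract X Y → X ∈ le
  ge_retract : ∀ ⦃X Y : C⦄, Y ∈ ge → IsRetract X Y → X ∈ ge
  le_shift : ∀ ⦃X : C⦄, X ∈ le → X⟦(1 : ℤ)⟧ ∈ le
  ge_shift : ∀ ⦃X : C⦄, X ∈ ge → X⟦(-1 : ℤ)⟧ ∈ ge
  orth : ∀ ⦃X Y : C⦄, X ∈ ge → Y ∈ le → ∀ f : X ⟶ Y⟦(1 : ℤ)⟧, f = 0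
  decomp : ∀ M : C, ∃ (A B : C) (_ : A ∈ le) (_ : B ∈ ge)
    (f : M ⟶ A) (g : A ⟶ B) (h : B ⟶ M⟦(1 : ℤ)⟧), Triangle.mk f g h ∈ distTriang C

variable {C : Type*} [Category C] [HasZeroObject C] [HasShift C ℤ]
  [Preadditive C] [∀ n : ℤ, (shiftFunctor C n).Additive] [Pretriangulated C]

lemma CategoryTheory.Retract.isRetract {D : Type*} [Category D] {X Y : D} (h : Retract X Y) :
    IsRetract X Y :=
  ⟨h.i, h.r, h.retract⟩

namespace IsWeightStructure

variable {le ge : Set C}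

theorem mem_le_of_forall_hom_eq_zero (w : IsWeightStructure C le ge) {M : C}
    (hM : ∀ ⦃B : C⦄, B ∈ ge → ∀ h : B ⟶ M⟦(1 : ℤ)⟧, h = 0) : M ∈ le := by
  obtain ⟨A, B, hA, hB, f, g, h, hT⟩ := w.decomp M
  have : Mono f := Triangle.mono₁ _ hT (hM hB h)
  have : IsSplitMono f := isSplitMono_of_mono f
  exact w.le_retract hA ⟨f, retraction f, IsSplitMono.id f⟩

theorem mem_ge_of_forall_hom_eq_zero (w : IsWeightStructure C le ge) {M : C}
    (hM : ∀ ⦃A : C⦄, A ∈ le → ∀ f : M ⟶ A⟦(1 : ℤ)⟧, f = 0) : M ∈ ge := by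
  let e : M⟦(-1 : ℤ)⟧⟦(1 : ℤ)⟧ ≅ M := shiftNegShift M 1
  obtain ⟨A, B, hA, hB, f, g, h, hT⟩ := w.decomp (M⟦(-1 : ℤ)⟧)
  have hf : f = 0 := by
    have : f⟦(1 : ℤ)⟧' = 0 := by
      rw [← e.hom_inv_id_assoc (f⟦(1 : ℤ)⟧'), hM hA (e.inv ≫ _), comp_zero]
    exact (shiftFunctor C (1 : ℤ)).map_eq_zero_iff.mp this
  have : Epi h := Triangle.epi₃ _ hT hf
  have : IsSplitEpi h := isSplitEpi_of_epi h
  exact w.ge_retract hB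
    ((Retract.ofIso e.symm).trans ⟨section_ h, h, IsSplitEpi.id h⟩).isRetract

end IsWeightStructure

/-- If `v` and `w` are weight structures on `C` with `C^{v≤0} ⊆ C^{w≤0}` and
`C^{v≥0} ⊆ C^{w≥0}`, then `v = w`. -/
theorem isWeightStructure_unique (vle vge wle wge : Set C)
    (v : IsWeightStructure C vle vge) (w : IsWeightStructure C wle wge)
    (hle : vle ⊆ wle) (hge : vge ⊆ wge) :
    vle = wle ∧ vge = wge :=
  ⟨hle.antisymm fun _ hM => v.mem_le_of_forall_hom_eq_zero fun _ hB h => w.orth (hge hB) hM h,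
    hge.antisymm fun _ hM => v.mem_ge_of_forall_hom_eq_zero fun _ hA f => w.orth hM (hle hA) f⟩
end

section
/- Let C and D be triangulated categories with weight structures w and v respectively, and let F : C ⇄ D : G be an adjoint pair of exact functors (F left adjoint to G). Then F is right weight-exact (F(C^{w≥0}) ⊆ D^{v≥0}) if and only if G is left weight-exact (G(D^{v≤0}) ⊆ C^{w≤0}). -/
/-!
By the adjunction and the commutation of `G` with `⟦1⟧`, `Hom(F X, Y⟦1⟧) ≃ Hom(X, (G Y)⟦1⟧)`.
Since `C^{w≤0}` is the right orthogonal of `C^{w≥1}` and `D^{v≥0}` the left orthogonal of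
`D^{v≤-1}`, both conditions say that these Hom-sets vanish for `X ∈ C^{w≥0}`, `Y ∈ D^{v≤0}`.
-/

open CategoryTheory Category Limits Pretriangulated

variable {C : Type*} [Category C] [HasZeroObject C] [HasShift C ℤ]
  [Preadditive C] [∀ n : ℤ, (shiftFunctor C n).Additive] [Pretriangulated C]
variable {D : Type*} [Category D] [HasZeroObject D] [HasShift D ℤ]
  [Preadditive D] [∀ n : ℤ, (shiftFunctor D n).Additive] [Pretriangulated D]

lemma CategoryTheory.Adjunction.subsingleton_hom_shift_iff {C D : Type*} [Category C]
    [Category D] {A : Type*} [AddMonoid A] [HasShift C A] [HasShift D A] {F : C ⥤ D}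
    {G : D ⥤ C} [G.CommShift A] (adj : F ⊣ G) (X : C) (Y : D) (a : A) :
    Subsingleton (F.obj X ⟶ Y⟦a⟧) ↔ Subsingleton (X ⟶ (G.obj Y)⟦a⟧) :=
  ((adj.homEquiv X _).trans ((Iso.refl X).homCongr ((G.commShiftIso a).app Y))).subsingleton_congr

namespace IsWeightStructure

variable {le ge : Set C} (w : IsWeightStructure C le ge)
include w

lemma subsingleton_hom {X Y : C} (hX : X ∈ ge) (hY : Y ∈ le) : Subsingleton (X ⟶ Y⟦(1 : ℤ)⟧) :=
  subsingleton_of_forall_eq 0 (w.orth hX hY)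

lemma mem_le_of_isSplitMono {X Y : C} (f : X ⟶ Y) [IsSplitMono f] (hY : Y ∈ le) : X ∈ le :=
  w.le_retract hY ⟨f, retraction f, IsSplitMono.id f⟩

lemma mem_ge_of_isSplitEpi {X Y : C} (g : Y ⟶ X) [IsSplitEpi g] (hY : Y ∈ ge) : X ∈ ge :=
  w.ge_retract hY ⟨section_ g, g, IsSplitEpi.id g⟩

lemma mem_le_iff {M : C} : M ∈ le ↔ ∀ X ∈ ge, Subsingleton (X ⟶ M⟦(1 : ℤ)⟧) := by
  refine ⟨fun hM X hX ↦ w.subsingleton_hom hX hM, fun hM ↦ ?_⟩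
  obtain ⟨A, B, hA, hB, f, g, h, hT⟩ := w.decomp M
  have : Mono f := Triangle.mono₁ _ hT (Subsingleton.elim (h := hM B hB) h 0)
  have := isSplitMono_of_mono f
  exact w.mem_le_of_isSplitMono f hA

lemma mem_ge_iff {M : C} : M ∈ ge ↔ ∀ Y ∈ le, Subsingleton (M ⟶ Y⟦(1 : ℤ)⟧) := by
  refine ⟨fun hM Y hY ↦ w.subsingleton_hom hM hY, fun hM ↦ ?_⟩
  -- `M⟦-1⟧` is decomposed because its maps to `A` correspond to maps `M ⟶ A⟦1⟧`
  obtain ⟨A, B, hA, hB, f, g, h, hT⟩ := w.decomp (M⟦(-1 : ℤ)⟧)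
  have : Subsingleton (M⟦(-1 : ℤ)⟧ ⟶ A) :=
    ((shiftEquiv C (1 : ℤ)).symm.toAdjunction.homEquiv M A).subsingleton_congr.2 (hM A hA)
  have : Epi h := Triangle.epi₃ _ hT (Subsingleton.elim f 0)
  have := isSplitEpi_of_epi h
  exact w.mem_ge_of_isSplitEpi (h ≫ (shiftNegShift M (1 : ℤ)).hom) hB

end IsWeightStructure

theorem rightWeightExact_iff_leftWeightExact_of_adjunction_general
    (leC geC : Set C) (leD geD : Set D)
    (w : IsWeightStructure C leC geC) (v : IsWeightStructure D leD geD)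
    (F : C ⥤ D) (G : D ⥤ C)
    [G.CommShift ℤ] (adj : F ⊣ G) :
    (∀ X ∈ geC, F.obj X ∈ geD) ↔ (∀ Y ∈ leD, G.obj Y ∈ leC) := by
  constructor
  · intro hF Y hY
    refine w.mem_le_iff.2 fun X hX ↦ ?_
    exact (adj.subsingleton_hom_shift_iff X Y 1).1 (v.subsingleton_hom (hF X hX) hY)
  · intro hG X hX
    refine v.mem_ge_iff.2 fun Y hY ↦ ?_
    exact (adj.subsingleton_hom_shift_iff X Y 1).2 (w.subsingleton_hom hX (hG Y hY))

/-- For an adjoint pair `F ⊣ G` of exact functors between triangulated categories with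
weight structures `w` (on `C`) and `v` (on `D`), `F` is right weight-exact if and only
if `G` is left weight-exact. -/
theorem rightWeightExact_iff_leftWeightExact_of_adjunction
    (leC geC : Set C) (leD geD : Set D)
    (w : IsWeightStructure C leC geC) (v : IsWeightStructure D leD geD)
    (F : C ⥤ D) (G : D ⥤ C) [F.CommShift ℤ] [F.IsTriangulated]
    [G.CommShift ℤ] [G.IsTriangulated] (adj : F ⊣ G) :
    (∀ X ∈ geC, F.obj X ∈ geD) ↔ (∀ Y ∈ leD, G.obj Y ∈ leC) :=
  rightWeightExact_iff_leftWeightExact_of_adjunction_general leC geC leD geD w v F G adj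
end

section
/- Let C and D be triangulated categories with weight structures w and v, where w is bounded. An exact functor F : C → D is left weight-exact if and only if F(C^{w=0}) ⊆ D^{v≤0}, and right weight-exact if and only if F(C^{w=0}) ⊆ D^{v≥0}. -/
/-!
If `X ∈ C^{w≤0}` has weights in `[-(m+1), 0]`, a weight decomposition `X⟦-1⟧ → A → B` of
`X⟦-1⟧` gives a distinguished triangle `B → X → A⟦1⟧` with `B` in the heart and `A` of weights in
`[-m, 0]`. By induction on `m`, every class of objects closed under isomorphisms, extensions and
`⟦1⟧` that contains the heart contains all of `C^{w≤0}` once `w` is bounded; dually for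
`C^{w≥0}` and `⟦-1⟧`. Since `F` is exact and `D^{v≤0}`, `D^{v≥0}` are extension-closed, the
objects sent by `F` into `D^{v≤0}` (resp. `D^{v≥0}`) form such a class.
-/

open CategoryTheory Category Limits Pretriangulated

variable {C : Type*} [Category C] [HasZeroObject C] [HasShift C ℤ]
  [Preadditive C] [∀ n : ℤ, (shiftFunctor C n).Additive] [Pretriangulated C]
variable {D : Type*} [Category D] [HasZeroObject D] [HasShift D ℤ]
  [Preadditive D] [∀ n : ℤ, (shiftFunctor D n).Additive] [Pretriangulated D]

namespace IsWeightStructure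

variable {le ge : Set C}

lemma mem_le_of_iso (w : IsWeightStructure C le ge) {X Y : C} (e : X ≅ Y) (hY : Y ∈ le) :
    X ∈ le :=
  w.le_retract hY ⟨e.hom, e.inv, e.hom_inv_id⟩

lemma mem_ge_of_iso (w : IsWeightStructure C le ge) {X Y : C} (e : X ≅ Y) (hY : Y ∈ ge) :
    X ∈ ge :=
  w.ge_retract hY ⟨e.hom, e.inv, e.hom_inv_id⟩

lemma shift_mem_le (w : IsWeightStructure C le ge) {X : C} (hX : X ∈ le) {n : ℤ} (hn : 0 ≤ n) :
    X⟦n⟧ ∈ le := by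
  induction n, hn using Int.leInduction with
  | base => exact w.mem_le_of_iso ((shiftFunctorZero C ℤ).app X) hX
  | succ n _ ih =>
    exact w.mem_le_of_iso ((shiftFunctorAdd' C n 1 (n + 1) rfl).app X) (w.le_shift ih)

lemma shift_mem_ge (w : IsWeightStructure C le ge) {X : C} (hX : X ∈ ge) {n : ℤ} (hn : n ≤ 0) :
    X⟦n⟧ ∈ ge := by
  induction n, hn using Int.leInductionDown with
  | base => exact w.mem_ge_of_iso ((shiftFunctorZero C ℤ).app X) hX
  | pred n _ ih =>
    exact w.mem_ge_of_iso ((shiftFunctorAdd' C n (-1) (n - 1) (by omega)).app X) (w.ge_shift ih)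

lemma shift_mem_le_of_le (w : IsWeightStructure C le ge) {X : C} {a b : ℤ} (hX : X⟦a⟧ ∈ le)
    (hab : a ≤ b) : X⟦b⟧ ∈ le :=
  w.mem_le_of_iso ((shiftFunctorAdd' C a (b - a) b (by omega)).app X) (w.shift_mem_le hX (by omega))

lemma shift_mem_ge_of_le (w : IsWeightStructure C le ge) {X : C} {a b : ℤ} (hX : X⟦a⟧ ∈ ge)
    (hba : b ≤ a) : X⟦b⟧ ∈ ge :=
  w.mem_ge_of_iso ((shiftFunctorAdd' C a (b - a) b (by omega)).app X) (w.shift_mem_ge hX (by omega))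

lemma mem_le_of_hom_eq_zero (w : IsWeightStructure C le ge) {Y : C}
    (h : ∀ X ∈ ge, ∀ f : X ⟶ Y⟦(1 : ℤ)⟧, f = 0) : Y ∈ le := by
  obtain ⟨A, B, hA, hB, f, _, k, hT⟩ := w.decomp Y
  have : Mono f := Triangle.mono₁ _ hT (h B hB k)
  have := isSplitMono_of_mono f
  exact w.le_retract hA ⟨f, retraction f, IsSplitMono.id f⟩

lemma mem_ge_of_hom_eq_zero (w : IsWeightStructure C le ge) {X : C}
    (h : ∀ Y ∈ le, ∀ f : X ⟶ Y⟦(1 : ℤ)⟧, f = 0) : X ∈ ge := by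
  let e := (shiftFunctorCompIsoId C (-1 : ℤ) 1 (by omega)).app X
  obtain ⟨A, B, hA, hB, f, _, k, hT⟩ := w.decomp (X⟦(-1 : ℤ)⟧)
  have hf : f = 0 := by
    apply (shiftFunctor C (1 : ℤ)).map_injective
    simpa using congrArg (e.hom ≫ ·) (h A hA (e.inv ≫ f⟦(1 : ℤ)⟧'))
  have : Epi k := Triangle.epi₃ _ hT hf
  have := isSplitEpi_of_epi k
  exact w.mem_ge_of_iso e.symm (w.ge_retract hB ⟨section_ k, k, IsSplitEpi.id k⟩)

lemma mem_le₂ (w : IsWeightStructure C le ge) {T : Triangle C} (hT : T ∈ distTriang C)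
    (h₁ : T.obj₁ ∈ le) (h₃ : T.obj₃ ∈ le) : T.obj₂ ∈ le := by
  refine w.mem_le_of_hom_eq_zero fun X hX φ => ?_
  obtain ⟨χ, rfl⟩ := Triangle.coyoneda_exact₂ _
    (rot_of_distTriang _ (rot_of_distTriang _ (rot_of_distTriang _ hT))) φ (w.orth hX h₃ _)
  rw [w.orth hX h₁ χ]
  exact zero_comp

lemma mem_ge₂ (w : IsWeightStructure C le ge) {T : Triangle C} (hT : T ∈ distTriang C)
    (h₁ : T.obj₁ ∈ ge) (h₃ : T.obj₃ ∈ ge) : T.obj₂ ∈ ge := by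
  refine w.mem_ge_of_hom_eq_zero fun Y hY φ => ?_
  obtain ⟨ψ, rfl⟩ := Triangle.yoneda_exact₂ _ hT φ (w.orth h₁ hY _)
  rw [w.orth h₃ hY ψ, comp_zero]

theorem le_induction (w : IsWeightStructure C le ge) {P : C → Prop}
    (hiso : ∀ ⦃X Y : C⦄, (X ≅ Y) → P Y → P X)
    (hext : ∀ T ∈ distTriang C, P T.obj₁ → P T.obj₃ → P T.obj₂)
    (hshift : ∀ ⦃X : C⦄, P X → P (X⟦(1 : ℤ)⟧)) (hheart : ∀ X ∈ le ∩ ge, P X)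
    {X : C} (hX : X ∈ le) {j : ℤ} (hj : X⟦j⟧ ∈ ge) : P X := by
  suffices ∀ m : ℕ, ∀ X ∈ le, X⟦-(m : ℤ)⟧ ∈ ge → P X from
    this (-j).toNat X hX (w.shift_mem_ge_of_le hj (by omega))
  intro m
  induction m with
  | zero =>
    intro X hX hX'
    exact hheart X ⟨hX, w.mem_ge_of_iso ((shiftFunctorZero' C _ (by simp)).app X).symm hX'⟩
  | succ m ih =>
    intro X hX hX'
    obtain ⟨A, B, hA, hB, _, _, _, hT⟩ := w.decomp (X⟦(-1 : ℤ)⟧)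
    let e := (shiftFunctorCompIsoId C (-1 : ℤ) 1 (by omega)).app X
    have hX₁ : X⟦(-1 : ℤ)⟧⟦-(m : ℤ)⟧ ∈ ge :=
      w.mem_ge_of_iso ((shiftFunctorAdd' C (-1) (-(m : ℤ)) _ rfl).app X).symm (by simpa using hX')
    have hB' : B ∈ le := w.mem_le₂ (rot_of_distTriang _ hT) hA (w.mem_le_of_iso e hX)
    have hA' : A⟦-(m : ℤ)⟧ ∈ ge := w.mem_ge₂ (Triangle.shift_distinguished _ hT _) hX₁
      (w.shift_mem_ge (n := -(m : ℤ)) hB (by omega))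
    exact hiso e.symm (hext _ (rot_of_distTriang _ (rot_of_distTriang _ hT)) (hheart B ⟨hB', hB⟩)
      (hshift (ih A hA hA')))

theorem ge_induction (w : IsWeightStructure C le ge) {P : C → Prop}
    (hext : ∀ T ∈ distTriang C, P T.obj₁ → P T.obj₃ → P T.obj₂)
    (hshift : ∀ ⦃X : C⦄, P X → P (X⟦(-1 : ℤ)⟧)) (hheart : ∀ X ∈ le ∩ ge, P X)
    {X : C} (hX : X ∈ ge) {i : ℤ} (hi : X⟦i⟧ ∈ le) : P X := by
  suffices ∀ m : ℕ, ∀ X ∈ ge, X⟦(m : ℤ)⟧ ∈ le → P X from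
    this i.toNat X hX (w.shift_mem_le_of_le hi (by omega))
  intro m
  induction m with
  | zero =>
    intro X hX hX'
    exact hheart X ⟨w.mem_le_of_iso ((shiftFunctorZero' C _ (by simp)).app X).symm hX', hX⟩
  | succ m ih =>
    intro X hX hX'
    obtain ⟨A, B, hA, hB, _, _, _, hT⟩ := w.decomp X
    have hX₁ : X⟦(1 : ℤ)⟧⟦(m : ℤ)⟧ ∈ le :=
      w.mem_le_of_iso ((shiftFunctorAdd' C 1 (m : ℤ) _ rfl).app X).symm
        (by simpa [add_comm] using hX')
    have hA' : A ∈ ge := w.mem_ge₂ hT hX hB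
    have hB' : B⟦(m : ℤ)⟧ ∈ le :=
      w.mem_le₂ (Triangle.shift_distinguished _ (rot_of_distTriang _ hT) _)
        (w.shift_mem_le (n := (m : ℤ)) hA (by omega)) hX₁
    exact hext _ (inv_rot_of_distTriang _ hT) (hshift (ih B hB hB')) (hheart A ⟨hA, hA'⟩)

end IsWeightStructure

/-- Let `w` be a bounded weight structure on `C` (every object lies in some `C^{w≤i}`
and some `C^{w≥j}`, where `M ∈ C^{w≤i}` iff `M⟦i⟧ ∈ C^{w≤0}`, etc.) and `v` a weight
structure on `D`. An exact functor `F : C ⥤ D` is left (resp. right) weight-exact if and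
only if it sends the heart `C^{w=0}` into `D^{v≤0}` (resp. into `D^{v≥0}`). -/
theorem weightExact_iff_heart_of_bounded
    (le ge : Set C) (le' ge' : Set D)
    (w : IsWeightStructure C le ge) (v : IsWeightStructure D le' ge')
    (hbdd : ∀ M : C, (∃ i : ℤ, M⟦i⟧ ∈ le) ∧ (∃ j : ℤ, M⟦j⟧ ∈ ge))
    (F : C ⥤ D) [F.CommShift ℤ] [F.IsTriangulated] :
    ((∀ X ∈ le, F.obj X ∈ le') ↔ (∀ X ∈ le ∩ ge, F.obj X ∈ le')) ∧
    ((∀ X ∈ ge, F.obj X ∈ ge') ↔ (∀ X ∈ le ∩ ge, F.obj X ∈ ge')) := by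
  refine ⟨⟨fun h X hX => h X hX.1, fun h X hX => ?_⟩, ⟨fun h X hX => h X hX.2, fun h X hX => ?_⟩⟩
  · obtain ⟨-, j, hj⟩ := hbdd X
    exact w.le_induction (P := fun X => F.obj X ∈ le')
      (fun _ _ e hY => v.mem_le_of_iso (F.mapIso e) hY)
      (fun T hT => v.mem_le₂ (F.map_distinguished T hT))
      (fun X hX => v.mem_le_of_iso ((F.commShiftIso (1 : ℤ)).app X) (v.le_shift hX)) h hX hj
  · obtain ⟨⟨i, hi⟩, -⟩ := hbdd X
    exact w.ge_induction (P := fun X => F.obj X ∈ ge')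
      (fun T hT => v.mem_ge₂ (F.map_distinguished T hT))
      (fun X hX => v.mem_ge_of_iso ((F.commShiftIso (-1 : ℤ)).app X) (v.ge_shift hX)) h hX hi
end

section
/- Let F : C → D be an exact functor of triangulated categories and w a relative weight structure on C with respect to F. Given M, M' ∈ C, integers l < m, fixed weight decomposition triangles w_{≥m+1}M → M → w_{≤m}M and w_{≥l+1}M' → M' → w_{≤l}M', and any morphism g : M → M', there exist morphisms c : w_{≥m+1}M → w_{≥l+1}M' and d : w_{≤m}M → w_{≤l}M' making the evident diagram commute; moreover F(d) is uniquely determined by g and the two right-hand triangle maps, and F(c) by g and the two left-hand triangle maps. -/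
/-! Weak orthogonality kills `b ≫ g ≫ a' : w_{≥m+1}M ⟶ w_{≤l}M'`, the weights being at least two
apart, so `b ≫ g` lifts through `b'` and the triangle axiom supplies `d`. Two choices of `d`
differ by a map factoring through `δ`, i.e. through a map `w_{≥m+1}M⟦1⟧ ⟶ w_{≤l}M'` across a
weight gap of at least one, which `F` kills by `F`-orthogonality; dually for `c`. -/

open CategoryTheory Category Limits Pretriangulated

variable {C : Type*} [Category C] [HasZeroObject C] [HasShift C ℤ]
  [Preadditive C] [∀ n : ℤ, (shiftFunctor C n).Additive] [Pretriangulated C]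
variable {D : Type*} [Category D] [HasZeroObject D] [HasShift D ℤ]
  [Preadditive D] [∀ n : ℤ, (shiftFunctor D n).Additive] [Pretriangulated D]

/-- A relative weight structure on `C` with respect to an exact functor `F : C ⥤ D`
(an `F`-weight structure, Bondarko): extension-stable Karoubi-closed classes
`le = C^{w≤0}`, `ge = C^{w≥0}` with shift semi-invariance, weak orthogonality
`C^{w≥0} ⊥ C^{w≤0}[2]`, `F`-orthogonality (`F` kills morphisms from `C^{w≥0}` to
`C^{w≤0}[1]`), and weight decompositions. -/
structure IsRelWeightStructure (F : C ⥤ D) (le ge : Set C) : Prop where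
  le_retract : ∀ ⦃X Y : C⦄, Y ∈ le → IsRetract X Y → X ∈ le
  ge_retract : ∀ ⦃X Y : C⦄, Y ∈ ge → IsRetract X Y → X ∈ ge
  le_ext : ∀ T ∈ distTriang C, T.obj₁ ∈ le → T.obj₃ ∈ le → T.obj₂ ∈ le
  ge_ext : ∀ T ∈ distTriang C, T.obj₁ ∈ ge → T.obj₃ ∈ ge → T.obj₂ ∈ ge
  le_shift : ∀ ⦃X : C⦄, X ∈ le → X⟦(1 : ℤ)⟧ ∈ le
  ge_shift : ∀ ⦃X : C⦄, X ∈ ge → X⟦(-1 : ℤ)⟧ ∈ ge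
  weak_orth : ∀ ⦃X Y : C⦄, X ∈ ge → Y ∈ le → ∀ f : X ⟶ Y⟦(2 : ℤ)⟧, f = 0
  F_orth : ∀ ⦃X Y : C⦄, X ∈ ge → Y ∈ le → ∀ f : X ⟶ Y⟦(1 : ℤ)⟧, F.map f = 0
  decomp : ∀ M : C, ∃ (A B : C) (_ : A ∈ le) (_ : B ∈ ge)
    (f : M ⟶ A) (g : A ⟶ B) (h : B ⟶ M⟦(1 : ℤ)⟧), Triangle.mk f g h ∈ distTriang C

section

omit [HasZeroObject D] [HasShift D ℤ] [∀ n : ℤ, (shiftFunctor D n).Additive] [Pretriangulated D]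

namespace CategoryTheory.Pretriangulated

lemma exists_comm_sq_of_comp_eq_zero {T T' : Triangle C} (hT : T ∈ distTriang C)
    (hT' : T' ∈ distTriang C) (g : T.obj₂ ⟶ T'.obj₂) (hg : T.mor₁ ≫ g ≫ T'.mor₂ = 0) :
    ∃ (c : T.obj₁ ⟶ T'.obj₁) (d : T.obj₃ ⟶ T'.obj₃),
      c ≫ T'.mor₁ = T.mor₁ ≫ g ∧ T.mor₂ ≫ d = g ≫ T'.mor₂ := by
  obtain ⟨c, hc⟩ := T'.coyoneda_exact₂ hT' (T.mor₁ ≫ g) (by rwa [assoc])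
  obtain ⟨d, hd, -⟩ := complete_distinguished_triangle_morphism _ _ hT hT' c g hc
  exact ⟨c, d, hc.symm, hd⟩

variable {F : C ⥤ D} [F.Additive] {T : Triangle C} (hT : T ∈ distTriang C)
include hT

lemma functor_map_eq_of_mor₂_comp_eq {Y : C} (hF : ∀ f : T.obj₁⟦(1 : ℤ)⟧ ⟶ Y, F.map f = 0)
    {d₁ d₂ : T.obj₃ ⟶ Y} (h : T.mor₂ ≫ d₁ = T.mor₂ ≫ d₂) : F.map d₁ = F.map d₂ := by
  obtain ⟨e, he⟩ := T.yoneda_exact₃ hT (d₁ - d₂) (by rw [Preadditive.comp_sub, h, sub_self])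
  rw [← sub_eq_zero, ← F.map_sub, he, F.map_comp, hF, comp_zero]

lemma functor_map_eq_of_comp_mor₂_eq {X : C} (hF : ∀ f : X ⟶ T.obj₁, F.map f = 0)
    {c₁ c₂ : X ⟶ T.obj₂} (h : c₁ ≫ T.mor₂ = c₂ ≫ T.mor₂) : F.map c₁ = F.map c₂ := by
  obtain ⟨e, he⟩ := T.coyoneda_exact₂ hT (c₁ - c₂) (by rw [Preadditive.sub_comp, h, sub_self])
  rw [← sub_eq_zero, ← F.map_sub, he, F.map_comp, hF, zero_comp]

end CategoryTheory.Pretriangulated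

namespace IsRelWeightStructure

variable {F : C ⥤ D} {le ge : Set C} (w : IsRelWeightStructure F le ge)
include w

lemma mem_le_of_iso {X Y : C} (e : X ≅ Y) (hY : Y ∈ le) : X ∈ le :=
  w.le_retract hY ⟨e.hom, e.inv, e.hom_inv_id⟩

lemma mem_ge_of_iso {X Y : C} (e : X ≅ Y) (hY : Y ∈ ge) : X ∈ ge :=
  w.ge_retract hY ⟨e.hom, e.inv, e.hom_inv_id⟩

lemma shift_mem_le_of_le {Y : C} {q p : ℤ} (hqp : q ≤ p) (hY : Y⟦q⟧ ∈ le) : Y⟦p⟧ ∈ le := by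
  induction p, hqp using Int.leInduction with
  | base => exact hY
  | succ p _ ih =>
    exact w.mem_le_of_iso ((shiftFunctorAdd' C p 1 (p + 1) rfl).app Y) (w.le_shift ih)

lemma eq_zero_of_shift_mem {X Y : C} {p q : ℤ} (hqp : q + 2 ≤ p) (hX : X⟦p⟧ ∈ ge)
    (hY : Y⟦q⟧ ∈ le) (f : X ⟶ Y) : f = 0 := by
  let e := (shiftFunctorAdd' C (p - 2) 2 p (by omega)).app Y
  have hfe : f⟦p⟧' ≫ e.hom = 0 := w.weak_orth hX (w.shift_mem_le_of_le (by omega) hY) _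
  rwa [Preadditive.IsIso.comp_right_eq_zero, Functor.map_eq_zero_iff] at hfe

end IsRelWeightStructure

end

omit [HasZeroObject D] [Pretriangulated D] in
lemma IsRelWeightStructure.map_eq_zero_of_shift_mem {F : C ⥤ D} [F.CommShift ℤ] [F.Additive]
    {le ge : Set C} (w : IsRelWeightStructure F le ge) {X Y : C} {p q : ℤ}
    (hqp : q + 1 ≤ p) (hX : X⟦p⟧ ∈ ge) (hY : Y⟦q⟧ ∈ le) (f : X ⟶ Y) : F.map f = 0 := by
  let e := (shiftFunctorAdd' C (p - 1) 1 p (by omega)).app Y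
  have hfe : F.map (f⟦p⟧' ≫ e.hom) = 0 := w.F_orth hX (w.shift_mem_le_of_le (by omega) hY) _
  rwa [F.map_comp, Preadditive.IsIso.comp_right_eq_zero,
    ← cancel_mono ((F.commShiftIso p).hom.app Y), zero_comp,
    Functor.commShiftIso_hom_naturality, Preadditive.IsIso.comp_left_eq_zero,
    Functor.map_eq_zero_iff] at hfe

theorem relWeightStructure_weak_functoriality_of_decompositions_general
    {F : C ⥤ D} [F.CommShift ℤ] [F.IsTriangulated] {le ge : Set C}
    (w : IsRelWeightStructure F le ge)
    (M M' : C) (l m : ℤ) (hlm : l < m)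
    (Xg Xl Xg' Xl' : C)
    (hXg : (shiftFunctor C (m + 1)).obj Xg ∈ ge)
    (hXl' : (shiftFunctor C l).obj Xl' ∈ le)
    (b : Xg ⟶ M) (a : M ⟶ Xl) (δ : Xl ⟶ Xg⟦(1 : ℤ)⟧)
    (hT : Triangle.mk b a δ ∈ distTriang C)
    (b' : Xg' ⟶ M') (a' : M' ⟶ Xl') (δ' : Xl' ⟶ Xg'⟦(1 : ℤ)⟧)
    (hT' : Triangle.mk b' a' δ' ∈ distTriang C)
    (g : M ⟶ M') :
    (∃ (c : Xg ⟶ Xg') (d : Xl ⟶ Xl'), c ≫ b' = b ≫ g ∧ a ≫ d = g ≫ a') ∧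
    (∀ d₁ d₂ : Xl ⟶ Xl', a ≫ d₁ = g ≫ a' → a ≫ d₂ = g ≫ a' → F.map d₁ = F.map d₂) ∧
    (∀ c₁ c₂ : Xg ⟶ Xg', c₁ ≫ b' = b ≫ g → c₂ ≫ b' = b ≫ g → F.map c₁ = F.map c₂) := by
  have hF : ∀ f : Xg⟦(1 : ℤ)⟧ ⟶ Xl', F.map f = 0 :=
    w.map_eq_zero_of_shift_mem (p := m) (by omega)
      (w.mem_ge_of_iso ((shiftFunctorAdd' C 1 m (m + 1) (by omega)).app Xg).symm hXg) hXl'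
  have hF' : ∀ f : Xg ⟶ Xl'⟦(-1 : ℤ)⟧, F.map f = 0 :=
    w.map_eq_zero_of_shift_mem (q := l + 1) (by omega) hXg
      (w.mem_le_of_iso ((shiftFunctorAdd' C (-1) (l + 1) l (by omega)).app Xl').symm hXl')
  refine ⟨exists_comm_sq_of_comp_eq_zero hT hT' g
      (w.eq_zero_of_shift_mem (p := m + 1) (by omega) hXg hXl' _), ?_, ?_⟩
  · exact fun d₁ d₂ h₁ h₂ => functor_map_eq_of_mor₂_comp_eq hT hF (h₁.trans h₂.symm)
  · exact fun c₁ c₂ h₁ h₂ =>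
      functor_map_eq_of_comp_mor₂_eq (inv_rot_of_distTriang _ hT') hF' (h₁.trans h₂.symm)

/-- Weak functoriality of weight decompositions for a relative weight structure: given
`g : M ⟶ M'`, `l < m`, and weight decomposition triangles
`w_{≥m+1}M → M → w_{≤m}M` and `w_{≥l+1}M' → M' → w_{≤l}M'`
(where `X ∈ C^{w≤m}` iff `X⟦m⟧ ∈ C^{w≤0}`, and `X ∈ C^{w≥m+1}` iff
`X⟦m+1⟧ ∈ C^{w≥0}`), there exist `c`, `d` making the evident diagram commute; moreover
`F(d)` is uniquely determined by `g` and the given triangles, and likewise `F(c)`. -/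
theorem relWeightStructure_weak_functoriality_of_decompositions
    {F : C ⥤ D} [F.CommShift ℤ] [F.IsTriangulated] {le ge : Set C}
    (w : IsRelWeightStructure F le ge)
    (M M' : C) (l m : ℤ) (hlm : l < m)
    (Xg Xl Xg' Xl' : C)
    (hXg : (shiftFunctor C (m + 1)).obj Xg ∈ ge)
    (hXl : (shiftFunctor C m).obj Xl ∈ le)
    (hXg' : (shiftFunctor C (l + 1)).obj Xg' ∈ ge)
    (hXl' : (shiftFunctor C l).obj Xl' ∈ le)
    (b : Xg ⟶ M) (a : M ⟶ Xl) (δ : Xl ⟶ Xg⟦(1 : ℤ)⟧)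
    (hT : Triangle.mk b a δ ∈ distTriang C)
    (b' : Xg' ⟶ M') (a' : M' ⟶ Xl') (δ' : Xl' ⟶ Xg'⟦(1 : ℤ)⟧)
    (hT' : Triangle.mk b' a' δ' ∈ distTriang C)
    (g : M ⟶ M') :
    (∃ (c : Xg ⟶ Xg') (d : Xl ⟶ Xl'), c ≫ b' = b ≫ g ∧ a ≫ d = g ≫ a') ∧
    (∀ d₁ d₂ : Xl ⟶ Xl', a ≫ d₁ = g ≫ a' → a ≫ d₂ = g ≫ a' → F.map d₁ = F.map d₂) ∧
    (∀ c₁ c₂ : Xg ⟶ Xg', c₁ ≫ b' = b ≫ g → c₂ ≫ b' = b ≫ g → F.map c₁ = F.map c₂) :=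
  relWeightStructure_weak_functoriality_of_decompositions_general w M M' l m hlm Xg Xl Xg' Xl' hXg
    hXl' b a δ hT b' a' δ' hT' g
end

section
/- Let w be a bounded relative weight structure on C with respect to F, and G : C → C' an exact functor, where C' carries a relative weight structure w' with respect to some F'. Then G is left weight-exact iff G(C^{w=0}) ⊆ C'^{w'≤0}, and right weight-exact iff G(C^{w=0}) ⊆ C'^{w'≥0}. -/
/-!
Both equivalences reduce to one fact: a class `P` closed under isomorphisms, extensions and
`⟦1⟧` that contains the heart contains every `M ∈ C^{w≤0}` with `M⟦-n⟧ ∈ C^{w≥0}` (apply it to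
`P = G⁻¹(C'^{w'≤0})`; boundedness supplies `n`). Induct on `n`: if `N → A → B → N⟦1⟧` is a
weight decomposition of `N = M⟦-n⟧ ∈ C^{w≥0}`, then `A` lies in the heart, and shifting the
rotated triangle by `n` gives a distinguished triangle `B⟦-1⟧⟦n⟧ → M → A⟦n⟧`, where `B⟦-1⟧⟦n⟧`
has weights in a shorter range. The right-exact case is dual.
-/

set_option linter.unusedSectionVars false

open CategoryTheory Category Limits Pretriangulated

variable {C : Type*} [Category C] [HasZeroObject C] [HasShift C ℤ]
  [Preadditive C] [∀ n : ℤ, (shiftFunctor C n).Additive] [Pretriangulated C]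
variable {D : Type*} [Category D] [HasZeroObject D] [HasShift D ℤ]
  [Preadditive D] [∀ n : ℤ, (shiftFunctor D n).Additive] [Pretriangulated D]

variable {C' : Type*} [Category C'] [HasZeroObject C'] [HasShift C' ℤ]
  [Preadditive C'] [∀ n : ℤ, (shiftFunctor C' n).Additive] [Pretriangulated C']
variable {D' : Type*} [Category D'] [HasZeroObject D'] [HasShift D' ℤ]
  [Preadditive D'] [∀ n : ℤ, (shiftFunctor D' n).Additive] [Pretriangulated D']

structure IsExtClosedShiftStable (S : Set C) (s : ℤ) : Prop where
  of_iso : ∀ ⦃X Y : C⦄, (X ≅ Y) → X ∈ S → Y ∈ S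
  obj₂_mem : ∀ T ∈ distTriang C, T.obj₁ ∈ S → T.obj₃ ∈ S → T.obj₂ ∈ S
  shift_mem : ∀ ⦃X : C⦄, X ∈ S → X⟦s⟧ ∈ S

namespace IsExtClosedShiftStable

variable {S : Set C} {s : ℤ}

lemma mem_iff_of_iso (hS : IsExtClosedShiftStable S s) {X Y : C} (e : X ≅ Y) :
    X ∈ S ↔ Y ∈ S :=
  ⟨hS.of_iso e, hS.of_iso e.symm⟩

lemma shift_shift_mem_iff (hS : IsExtClosedShiftStable S s) {X : C} {a b c : ℤ}
    (h : a + b = c) : X⟦a⟧⟦b⟧ ∈ S ↔ X⟦c⟧ ∈ S :=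
  hS.mem_iff_of_iso ((shiftFunctorAdd' C a b c h).app X).symm

lemma shift_shift_mem_iff_of_add_eq_zero (hS : IsExtClosedShiftStable S s) {X : C}
    {a b : ℤ} (h : a + b = 0) : X⟦a⟧⟦b⟧ ∈ S ↔ X ∈ S :=
  hS.mem_iff_of_iso ((shiftFunctorCompIsoId C a b h).app X)

lemma shift_zero_mem_iff (hS : IsExtClosedShiftStable S s) {X : C} :
    X⟦(0 : ℤ)⟧ ∈ S ↔ X ∈ S :=
  hS.mem_iff_of_iso ((shiftFunctorZero C ℤ).app X)

lemma shift_obj₂_mem (hS : IsExtClosedShiftStable S s) (a : ℤ) :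
    ∀ T ∈ distTriang C, T.obj₁⟦a⟧ ∈ S → T.obj₃⟦a⟧ ∈ S → T.obj₂⟦a⟧ ∈ S :=
  fun T hT => hS.obj₂_mem _ (T.shift_distinguished hT a)

lemma shift_add_natCast_mul_mem (hS : IsExtClosedShiftStable S s) {X : C} {a : ℤ}
    (hX : X⟦a⟧ ∈ S) (n : ℕ) : X⟦a + n * s⟧ ∈ S := by
  induction n with
  | zero => simpa using hX
  | succ n ih => exact (hS.shift_shift_mem_iff (by push_cast; ring)).1 (hS.shift_mem ih)

lemma shift_mem_of_le (hS : IsExtClosedShiftStable S 1) {X : C} {a b : ℤ}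
    (hX : X⟦a⟧ ∈ S) (hab : a ≤ b) : X⟦b⟧ ∈ S := by
  have h := hS.shift_add_natCast_mul_mem hX (b - a).toNat
  rwa [mul_one, show a + (b - a).toNat = b by omega] at h

lemma shift_mem_of_ge (hS : IsExtClosedShiftStable S (-1)) {X : C} {a b : ℤ}
    (hX : X⟦a⟧ ∈ S) (hba : b ≤ a) : X⟦b⟧ ∈ S := by
  have h := hS.shift_add_natCast_mul_mem hX (a - b).toNat
  rwa [mul_neg_one, ← sub_eq_add_neg, show a - (a - b).toNat = b by omega] at h

lemma shift_mem_of_nonneg (hS : IsExtClosedShiftStable S 1) {X : C} (hX : X ∈ S) {a : ℤ}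
    (ha : 0 ≤ a) : X⟦a⟧ ∈ S :=
  hS.shift_mem_of_le (hS.shift_zero_mem_iff.2 hX) ha

lemma shift_mem_of_nonpos (hS : IsExtClosedShiftStable S (-1)) {X : C} (hX : X ∈ S) {a : ℤ}
    (ha : a ≤ 0) : X⟦a⟧ ∈ S :=
  hS.shift_mem_of_ge (hS.shift_zero_mem_iff.2 hX) ha

lemma preimage {S : Set C'} (hS : IsExtClosedShiftStable S s) (G : C ⥤ C') [G.CommShift ℤ]
    [G.IsTriangulated] : IsExtClosedShiftStable (G.obj ⁻¹' S) s where
  of_iso _ _ e := hS.of_iso (G.mapIso e)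
  obj₂_mem T hT := hS.obj₂_mem _ (G.map_distinguished T hT)
  shift_mem X hX := hS.of_iso ((G.commShiftIso s).app X).symm (hS.shift_mem hX)

end IsExtClosedShiftStable

namespace IsRelWeightStructure

variable {F : C ⥤ D} {le ge : Set C}

lemma isExtClosedShiftStable_le (w : IsRelWeightStructure F le ge) :
    IsExtClosedShiftStable le 1 where
  of_iso _ _ e hX := w.le_retract hX ⟨e.inv, e.hom, e.inv_hom_id⟩
  obj₂_mem := w.le_ext
  shift_mem := w.le_shift

lemma isExtClosedShiftStable_ge (w : IsRelWeightStructure F le ge) :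
    IsExtClosedShiftStable ge (-1) where
  of_iso _ _ e hX := w.ge_retract hX ⟨e.inv, e.hom, e.inv_hom_id⟩
  obj₂_mem := w.ge_ext
  shift_mem := w.ge_shift

lemma shift_natCast_mem_of_heart_subset (w : IsRelWeightStructure F le ge)
    {P : Set C} (hP : IsExtClosedShiftStable P 1) (hheart : le ∩ ge ⊆ P) (n : ℕ) {N : C}
    (hN : N ∈ ge) (hNn : N⟦(n : ℤ)⟧ ∈ le) : N⟦(n : ℤ)⟧ ∈ P := by
  have hle := w.isExtClosedShiftStable_le
  induction n generalizing N with
  | zero => exact hP.shift_mem_of_nonneg (hheart ⟨hle.shift_zero_mem_iff.1 hNn, hN⟩) le_rfl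
  | succ n ih =>
    obtain ⟨A, B, hA, hB, _, _, _, hT⟩ := w.decomp N
    have hAge : A ∈ ge := w.ge_ext _ hT hN hB
    have hBn : B⟦(n : ℤ)⟧ ∈ le := by
      refine hle.shift_obj₂_mem n _ (rot_of_distTriang _ hT) ?_ ?_
      · exact hle.shift_mem_of_nonneg hA (by omega)
      · exact (hle.shift_shift_mem_iff (by push_cast; ring)).2 hNn
    refine hP.shift_obj₂_mem _ _ (inv_rot_of_distTriang _ hT) ?_ ?_
    · exact (hP.shift_shift_mem_iff (by push_cast; ring)).2 (ih hB hBn)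
    · exact hP.shift_mem_of_nonneg (hheart ⟨hA, hAge⟩) (by omega)

lemma shift_neg_natCast_mem_of_heart_subset
    (w : IsRelWeightStructure F le ge) {P : Set C} (hP : IsExtClosedShiftStable P (-1))
    (hheart : le ∩ ge ⊆ P) (n : ℕ) {N : C} (hN : N ∈ le) (hNn : N⟦-(n : ℤ)⟧ ∈ ge) :
    N⟦-(n : ℤ)⟧ ∈ P := by
  have hge := w.isExtClosedShiftStable_ge
  induction n generalizing N with
  | zero => exact hP.shift_mem_of_nonpos (hheart ⟨hN, hge.shift_zero_mem_iff.1 hNn⟩) le_rfl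
  | succ n ih =>
    obtain ⟨A, B, hA, hB, _, _, _, hT⟩ := w.decomp (N⟦(-1 : ℤ)⟧)
    have hBle : B ∈ le := w.le_ext _ (rot_of_distTriang _ hT) hA
      ((w.isExtClosedShiftStable_le.shift_shift_mem_iff_of_add_eq_zero (by norm_num)).2 hN)
    have hAn : A⟦-(n : ℤ)⟧ ∈ ge := by
      refine hge.shift_obj₂_mem _ _ hT ?_ (hge.shift_mem_of_nonpos hB (by omega))
      exact (hge.shift_shift_mem_iff (by push_cast; ring)).2 hNn
    rw [← hP.shift_shift_mem_iff (show (-1 : ℤ) + -(n : ℤ) = -((n + 1 : ℕ) : ℤ) by push_cast; ring)]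
    refine hP.shift_obj₂_mem _ _ (inv_rot_of_distTriang _ hT) ?_ (ih hA hAn)
    exact (hP.shift_shift_mem_iff rfl).2 (hP.shift_mem_of_nonpos (hheart ⟨hBle, hB⟩) (by omega))

lemma mem_of_heart_subset_of_mem_le (w : IsRelWeightStructure F le ge) {P : Set C}
    (hP : IsExtClosedShiftStable P 1) (hheart : le ∩ ge ⊆ P) {M : C} (hM : M ∈ le) {j : ℤ}
    (hj : M⟦j⟧ ∈ ge) : M ∈ P := by
  set n := (-j).toNat
  have hN : M⟦-(n : ℤ)⟧ ∈ ge := w.isExtClosedShiftStable_ge.shift_mem_of_ge hj (by omega)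
  have hNn : M⟦-(n : ℤ)⟧⟦(n : ℤ)⟧ ∈ le :=
    (w.isExtClosedShiftStable_le.shift_shift_mem_iff_of_add_eq_zero (neg_add_cancel _)).2 hM
  exact (hP.shift_shift_mem_iff_of_add_eq_zero (neg_add_cancel _)).1
    (w.shift_natCast_mem_of_heart_subset hP hheart n hN hNn)

lemma mem_of_heart_subset_of_mem_ge (w : IsRelWeightStructure F le ge) {P : Set C}
    (hP : IsExtClosedShiftStable P (-1)) (hheart : le ∩ ge ⊆ P) {M : C} (hM : M ∈ ge) {i : ℤ}
    (hi : M⟦i⟧ ∈ le) : M ∈ P := by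
  set n := i.toNat
  have hN : M⟦(n : ℤ)⟧ ∈ le := w.isExtClosedShiftStable_le.shift_mem_of_le hi (by omega)
  have hNn : M⟦(n : ℤ)⟧⟦-(n : ℤ)⟧ ∈ ge :=
    (w.isExtClosedShiftStable_ge.shift_shift_mem_iff_of_add_eq_zero (add_neg_cancel _)).2 hM
  exact (hP.shift_shift_mem_iff_of_add_eq_zero (add_neg_cancel _)).1
    (w.shift_neg_natCast_mem_of_heart_subset hP hheart n hN hNn)

end IsRelWeightStructure

theorem relWeightExact_iff_heart_of_bounded_general
    {F : C ⥤ D} {le ge : Set C}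
    (w : IsRelWeightStructure F le ge)
    {F' : C' ⥤ D'} {le' ge' : Set C'}
    (w' : IsRelWeightStructure F' le' ge')
    (hbdd : ∀ M : C, (∃ i : ℤ, M⟦i⟧ ∈ le) ∧ (∃ j : ℤ, M⟦j⟧ ∈ ge))
    (G : C ⥤ C') [G.CommShift ℤ] [G.IsTriangulated] :
    ((∀ X ∈ le, G.obj X ∈ le') ↔ (∀ X ∈ le ∩ ge, G.obj X ∈ le')) ∧
    ((∀ X ∈ ge, G.obj X ∈ ge') ↔ (∀ X ∈ le ∩ ge, G.obj X ∈ ge')) := by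
  refine ⟨⟨fun h X hX => h X hX.1, fun h X hX => ?_⟩, ⟨fun h X hX => h X hX.2, fun h X hX => ?_⟩⟩
  · obtain ⟨j, hj⟩ := (hbdd X).2
    exact w.mem_of_heart_subset_of_mem_le (w'.isExtClosedShiftStable_le.preimage G) h hX hj
  · obtain ⟨i, hi⟩ := (hbdd X).1
    exact w.mem_of_heart_subset_of_mem_ge (w'.isExtClosedShiftStable_ge.preimage G) h hX hi

/-- For a bounded relative weight structure `w` on `C` (with respect to `F`) and a
relative weight structure `w'` on `C'` (with respect to `F'`), an exact functor
`G : C ⥤ C'` is left (resp. right) weight-exact iff it sends the heart `C^{w=0}` into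
`C'^{w'≤0}` (resp. into `C'^{w'≥0}`). -/
theorem relWeightExact_iff_heart_of_bounded
    {F : C ⥤ D} [F.CommShift ℤ] [F.IsTriangulated] {le ge : Set C}
    (w : IsRelWeightStructure F le ge)
    {F' : C' ⥤ D'} [F'.CommShift ℤ] [F'.IsTriangulated] {le' ge' : Set C'}
    (w' : IsRelWeightStructure F' le' ge')
    (hbdd : ∀ M : C, (∃ i : ℤ, M⟦i⟧ ∈ le) ∧ (∃ j : ℤ, M⟦j⟧ ∈ ge))
    (G : C ⥤ C') [G.CommShift ℤ] [G.IsTriangulated] :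
    ((∀ X ∈ le, G.obj X ∈ le') ↔ (∀ X ∈ le ∩ ge, G.obj X ∈ le')) ∧
    ((∀ X ∈ ge, G.obj X ∈ ge') ↔ (∀ X ∈ le ∩ ge, G.obj X ∈ ge')) :=
  relWeightExact_iff_heart_of_bounded_general w w' hbdd G
end

section
/- Let C, C' be triangulated categories each equipped with a weight structure (w, w') and an adjacent t-structure (t, t'), and let F : C → C' be exact with right adjoint G : C' → C. Then F is left (resp. right) weight-exact with respect to w, w' if and only if G is left (resp. right) t-exact with respect to t', t. -/
open CategoryTheory Category Limits Pretriangulated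

/-- A t-structure on a triangulated category `C`, given by the classes
`le = C^{t≤0}` and `ge = C^{t≥0}`. -/
structure IsTStructure (C : Type*) [Category C] [HasZeroObject C] [HasShift C ℤ]
    [Preadditive C] [∀ n : ℤ, (shiftFunctor C n).Additive] [Pretriangulated C]
    (le ge : Set C) : Prop where
  le_iso : ∀ ⦃X Y : C⦄, Y ∈ le → Nonempty (X ≅ Y) → X ∈ le
  ge_iso : ∀ ⦃X Y : C⦄, Y ∈ ge → Nonempty (X ≅ Y) → X ∈ ge
  le_shift : ∀ ⦃X : C⦄, X ∈ le → X⟦(1 : ℤ)⟧ ∈ le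
  ge_shift : ∀ ⦃X : C⦄, X ∈ ge → X⟦(-1 : ℤ)⟧ ∈ ge
  orth : ∀ ⦃X Y : C⦄, X ∈ le → Y⟦(1 : ℤ)⟧ ∈ ge → ∀ f : X ⟶ Y, f = 0
  decomp : ∀ M : C, ∃ (A B : C) (_ : A ∈ le) (_ : B⟦(1 : ℤ)⟧ ∈ ge)
    (f : A ⟶ M) (g : M ⟶ B) (h : B ⟶ A⟦(1 : ℤ)⟧), Triangle.mk f g h ∈ distTriang C
variable {C : Type*} [Category C] [HasZeroObject C] [HasShift C ℤ]
  [Preadditive C] [∀ n : ℤ, (shiftFunctor C n).Additive] [Pretriangulated C]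
variable {C' : Type*} [Category C'] [HasZeroObject C'] [HasShift C' ℤ]
  [Preadditive C'] [∀ n : ℤ, (shiftFunctor C' n).Additive] [Pretriangulated C']

/-! Each of the four classes is an orthogonal of a shift of another one: `C^{t≤0}` and `C^{w≥0}`
are left orthogonals, `C^{t≥0}` and `C^{w≤0}` right orthogonals, the nontrivial inclusions coming
from the decomposition triangles. Since `G` commutes with shifts, the adjunction identifies the
vanishing of all maps `F X ⟶ Y⟦n⟧` with that of all maps `X ⟶ (G Y)⟦n⟧`, so `F` preserves a
class exactly when `G` preserves the corresponding orthogonal; adjacency makes the classes of `w`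
and `t` that appear on the two sides agree. -/

namespace CategoryTheory

variable {D D' : Type*} [Category D] [Category D'] [HasZeroMorphisms D] [HasZeroMorphisms D']

lemma forall_hom_eq_zero_congr {X Y X' Y' : D} (eX : X ≅ X') (eY : Y ≅ Y') :
    (∀ f : X ⟶ Y, f = 0) ↔ ∀ f : X' ⟶ Y', f = 0 := by
  simp only [← subsingleton_iff_forall_eq]
  exact (eX.homCongr eY).subsingleton_congr

lemma Adjunction.forall_hom_eq_zero_iff {F : D ⥤ D'} {G : D' ⥤ D} (adj : F ⊣ G)
    (X : D) (Y : D') : (∀ f : F.obj X ⟶ Y, f = 0) ↔ ∀ g : X ⟶ G.obj Y, g = 0 := by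
  simp only [← subsingleton_iff_forall_eq]
  exact (adj.homEquiv X Y).subsingleton_congr

lemma Adjunction.forall_hom_shift_eq_zero_iff [HasShift D ℤ] [HasShift D' ℤ]
    {F : D ⥤ D'} {G : D' ⥤ D} [G.CommShift ℤ] (adj : F ⊣ G) (n : ℤ) (X : D) (Y : D') :
    (∀ f : F.obj X ⟶ Y⟦n⟧, f = 0) ↔ ∀ g : X ⟶ (G.obj Y)⟦n⟧, g = 0 :=
  (adj.forall_hom_eq_zero_iff X _).trans
    (forall_hom_eq_zero_congr (Iso.refl X) ((G.commShiftIso n).app Y))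

end CategoryTheory

namespace IsTStructure

variable {tle tge : Set C} (t : IsTStructure C tle tge)
include t

lemma shift_neg_one_shift_one_mem_ge {Y : C} (hY : Y ∈ tge) : Y⟦(-1 : ℤ)⟧⟦(1 : ℤ)⟧ ∈ tge :=
  t.ge_iso hY ⟨(shiftFunctorCompIsoId C (-1 : ℤ) 1 (neg_add_cancel 1)).app Y⟩

lemma mem_le_of_orth {Z : C} (hZ : ∀ Y : C, Y⟦(1 : ℤ)⟧ ∈ tge → ∀ f : Z ⟶ Y, f = 0) :
    Z ∈ tle := by
  obtain ⟨A, B, hA, hB, f, g, h, hT⟩ := t.decomp Z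
  obtain ⟨ψ, hψ⟩ : ∃ ψ : A⟦(1 : ℤ)⟧ ⟶ B, 𝟙 B = h ≫ ψ :=
    Triangle.yoneda_exact₃ _ hT _ (by
      change g ≫ 𝟙 B = 0
      rw [hZ B hB g, zero_comp])
  have hB0 : IsZero B := by
    rw [IsZero.iff_id_eq_zero, hψ, t.orth (t.le_shift hA) hB ψ, comp_zero]
  have : IsIso f := (Triangle.isZero₃_iff_isIso₁ _ hT).1 hB0
  exact t.le_iso hA ⟨(asIso f).symm⟩

lemma mem_ge_of_orth {Z : C} (hZ : ∀ X ∈ tle, ∀ f : X ⟶ Z⟦(-1 : ℤ)⟧, f = 0) : Z ∈ tge := by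
  obtain ⟨A, B, hA, hB, f, g, h, hT⟩ := t.decomp (Z⟦(-1 : ℤ)⟧)
  obtain ⟨ψ, hψ⟩ : ∃ ψ : A⟦(1 : ℤ)⟧ ⟶ B, 𝟙 _ = ψ ≫ h :=
    Triangle.coyoneda_exact₁ _ hT _ (by
      change 𝟙 _ ≫ f⟦(1 : ℤ)⟧' = 0
      rw [hZ A hA f, Functor.map_zero, comp_zero])
  have hA0 : IsZero (A⟦(1 : ℤ)⟧) := by
    rw [IsZero.iff_id_eq_zero, hψ, t.orth (t.le_shift hA) hB ψ, zero_comp]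
  have : IsIso g := (Triangle.isZero₃_iff_isIso₁ _ (rot_of_distTriang _ hT)).1 hA0
  refine t.ge_iso hB ⟨?_⟩
  exact ((shiftFunctorCompIsoId C (-1 : ℤ) 1 (neg_add_cancel 1)).app Z).symm ≪≫
    (shiftFunctor C (1 : ℤ)).mapIso (asIso g)

end IsTStructure

namespace IsWeightStructure

variable {wle wge : Set C} (w : IsWeightStructure C wle wge)
include w

lemma mem_le_of_orth {Z : C} (hZ : ∀ X ∈ wge, ∀ f : X ⟶ Z⟦(1 : ℤ)⟧, f = 0) : Z ∈ wle := by
  obtain ⟨A, B, hA, hB, f, g, h, hT⟩ := w.decomp Z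
  obtain ⟨r, hr⟩ : ∃ r : A ⟶ Z, 𝟙 Z = f ≫ r :=
    Triangle.yoneda_exact₂ _ (inv_rot_of_distTriang _ hT) _ (by
      change (-(h⟦(-1 : ℤ)⟧') ≫
        (shiftFunctorCompIsoId C (1 : ℤ) (-1) (add_neg_cancel 1)).hom.app Z) ≫ 𝟙 Z = 0
      simp [hZ B hB h])
  exact w.le_retract hA ⟨f, r, hr.symm⟩

lemma mem_ge_of_orth {Z : C} (hZ : ∀ Y ∈ wle, ∀ f : Z ⟶ Y⟦(1 : ℤ)⟧, f = 0) : Z ∈ wge := by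
  obtain ⟨A, B, hA, hB, f, g, h, hT⟩ := w.decomp (Z⟦(-1 : ℤ)⟧)
  let e := (shiftFunctorCompIsoId C (-1 : ℤ) 1 (neg_add_cancel 1)).app Z
  have hf : f⟦(1 : ℤ)⟧' = 0 := by
    rw [← cancel_epi e.inv, comp_zero]
    exact hZ A hA _
  obtain ⟨s, hs⟩ : ∃ s : Z⟦(-1 : ℤ)⟧⟦(1 : ℤ)⟧ ⟶ B, 𝟙 _ = s ≫ h :=
    Triangle.coyoneda_exact₃ _ (rot_of_distTriang _ hT) _ (by
      change 𝟙 _ ≫ (-(f⟦(1 : ℤ)⟧')) = 0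
      rw [hf, neg_zero, comp_zero])
  refine w.ge_retract hB ⟨e.inv ≫ s, h ≫ e.hom, ?_⟩
  rw [assoc, reassoc_of% hs.symm]
  exact e.inv_hom_id

end IsWeightStructure

theorem weightExact_iff_adjoint_tExact_general
    (wle wge tle tge : Set C) (wle' wge' tle' tge' : Set C')
    (w : IsWeightStructure C wle wge) (t : IsTStructure C tle tge)
    (w' : IsWeightStructure C' wle' wge') (t' : IsTStructure C' tle' tge')
    (adj₁ : wle = tle) (adj₂ : wle' = tle')
    (F : C ⥤ C') (G : C' ⥤ C)
    [G.CommShift ℤ] (adj : F ⊣ G) :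
    ((∀ X ∈ wle, F.obj X ∈ wle') ↔ (∀ Y ∈ tge', G.obj Y ∈ tge)) ∧
    ((∀ X ∈ wge, F.obj X ∈ wge') ↔ (∀ Y ∈ tle', G.obj Y ∈ tle)) := by
  subst adj₁ adj₂
  refine ⟨⟨fun hF Y hY => ?_, fun hG X hX => ?_⟩, ⟨fun hF Y hY => ?_, fun hG X hX => ?_⟩⟩
  · refine t.mem_ge_of_orth fun X hX => ?_
    rw [← adj.forall_hom_shift_eq_zero_iff]
    exact t'.orth (hF X hX) (t'.shift_neg_one_shift_one_mem_ge hY)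
  · refine t'.mem_le_of_orth fun Y hY => ?_
    rw [adj.forall_hom_eq_zero_iff]
    exact t.orth hX (t.ge_iso (hG _ hY) ⟨((G.commShiftIso (1 : ℤ)).app Y).symm⟩)
  · refine w.mem_le_of_orth fun X hX => ?_
    rw [← adj.forall_hom_shift_eq_zero_iff]
    exact w'.orth (hF X hX) hY
  · refine w'.mem_ge_of_orth fun Y hY => ?_
    rw [adj.forall_hom_shift_eq_zero_iff]
    exact w.orth hX (hG Y hY)

/-- Let `C`, `C'` carry weight structures `w`, `w'` with adjacent t-structures `t`,
`t'` (i.e. `C^{w≤0} = C^{t≤0}` and `C'^{w'≤0} = C'^{t'≤0}`), and `F : C ⥤ C'` an exact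
functor with right adjoint `G`. Then `F` is left (resp. right) weight-exact iff `G` is
left (resp. right) t-exact, where `G` is left t-exact if it maps `C'^{t'≥0}` into
`C^{t≥0}`, and right t-exact if it maps `C'^{t'≤0}` into `C^{t≤0}`. -/
theorem weightExact_iff_adjoint_tExact
    (wle wge tle tge : Set C) (wle' wge' tle' tge' : Set C')
    (w : IsWeightStructure C wle wge) (t : IsTStructure C tle tge)
    (w' : IsWeightStructure C' wle' wge') (t' : IsTStructure C' tle' tge')
    (adj₁ : wle = tle) (adj₂ : wle' = tle')
    (F : C ⥤ C') (G : C' ⥤ C) [F.CommShift ℤ] [F.IsTriangulated]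
    [G.CommShift ℤ] [G.IsTriangulated] (adj : F ⊣ G) :
    ((∀ X ∈ wle, F.obj X ∈ wle') ↔ (∀ Y ∈ tge', G.obj Y ∈ tge)) ∧
    ((∀ X ∈ wge, F.obj X ∈ wge') ↔ (∀ Y ∈ tle', G.obj Y ∈ tle)) :=
  weightExact_iff_adjoint_tExact_general wle wge tle tge wle' wge' tle' tge' w t w' t' adj₁ adj₂ F G
    adj
end
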